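/- Let p be an odd prime, let m ∈ {1, 2, ..., p−1} be an integer, and let s be a p-adic integer. Then the generalized binomial coefficient C(m + ps − 1, p−1) satisfies C(m + ps − 1, p−1) ≡ ps/m − p²s²/m² + (p²s/m)·H_m (mod p³), where H_m = ∑_{k=1}^m 1/k is the m-th harmonic number. -/

import Mathlib

/-!
Write `ε = p s`. In the product defining `C(m + ε - 1, p - 1)` the factor `i = m - 1` is `ε`;
indexing the others by `j ∈ [1, p - 1] \ {m}`, `j ≡ m - 1 - i (mod p)`, gives
`C(m + ε - 1, p - 1) = (ε / m) ∏_{j ≠ m} (1 + e_j / j)` with `e_j = ε` for `j < m` and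
`e_j = ε - p` for `j > m`. Every `e_j / j` has norm at most `1/p`, so in the ultrametric norm the
product is `1 + ∑ e_j / j = 1 + ε (H_{p-1} - 1/m) - p (H_{p-1} - H_m)` modulo `p²`. Pairing `k`
with `p - k` shows `H_{p-1} ≡ 0 (mod p)` for odd `p`, and what is left is
`(ε / m) (1 + p H_m - ε / m)`, the claimed expansion.
-/

open Finset

/-- Generalized binomial coefficient `C(x,k) = x(x-1)⋯(x-k+1)/k!`. -/
noncomputable def gbinom {K : Type*} [Field K] [CharZero K] (x : K) (k : ℕ) : K :=
  (∏ i ∈ Finset.range k, (x - i)) / (k.factorial : K)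

section Ultrametric

variable {R : Type*} [NormedCommRing R] [NormOneClass R] [IsUltrametricDist R]

theorem norm_prod_one_add_sub_one_add_sum_le {ι : Type*} (s : Finset ι) (u : ι → R) {δ : ℝ}
    (hδ : δ ≤ 1) (hu : ∀ i ∈ s, ‖u i‖ ≤ δ) :
    ‖∏ i ∈ s, (1 + u i) - (1 + ∑ i ∈ s, u i)‖ ≤ δ ^ 2 := by
  classical
  induction s using Finset.induction_on with
  | empty => simpa using sq_nonneg δ
  | insert x t hx ih =>
    have hux := hu x (mem_insert_self x t)
    have hut : ∀ i ∈ t, ‖u i‖ ≤ δ := fun i hi => hu i (mem_insert_of_mem hi)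
    have hδ0 : 0 ≤ δ := (norm_nonneg _).trans hux
    have hsum : ‖∑ i ∈ t, u i‖ ≤ δ :=
      IsUltrametricDist.norm_sum_le_of_forall_le_of_nonneg hδ0 hut
    have hone : ‖1 + u x‖ ≤ 1 :=
      (IsUltrametricDist.norm_add_le_max _ _).trans (by simp [hux.trans hδ])
    set E := ∏ i ∈ t, (1 + u i) - (1 + ∑ i ∈ t, u i)
    have hsplit : (1 + u x) * ∏ i ∈ t, (1 + u i) - (1 + (u x + ∑ i ∈ t, u i)) =
        u x * ∑ i ∈ t, u i + (1 + u x) * E := by ring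
    rw [prod_insert hx, sum_insert hx, hsplit]
    refine (IsUltrametricDist.norm_add_le_max _ _).trans (max_le ?_ ?_)
    · calc ‖u x * ∑ i ∈ t, u i‖ ≤ ‖u x‖ * ‖∑ i ∈ t, u i‖ := norm_mul_le _ _
        _ ≤ δ * δ := mul_le_mul hux hsum (norm_nonneg _) hδ0
        _ = δ ^ 2 := (sq δ).symm
    · calc ‖(1 + u x) * E‖ ≤ ‖1 + u x‖ * ‖E‖ := norm_mul_le _ _
        _ ≤ 1 * δ ^ 2 := mul_le_mul hone (ih hut) (norm_nonneg _) zero_le_one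
        _ = δ ^ 2 := one_mul _

end Ultrametric

theorem prod_range_sub_eq_mul_prod_erase {K : Type*} [CommRing K] {p m : ℕ} (hm1 : 1 ≤ m)
    (hmp : m ≤ p - 1) (ε : K) :
    ∏ i ∈ range (p - 1), ((m : K) + ε - 1 - i) =
      ε * ∏ j ∈ (Icc 1 (p - 1)).erase m, ((j : K) + (ε - if m < j then (p : K) else 0)) := by
  have hmem : m - 1 ∈ range (p - 1) := mem_range.mpr (by omega)
  rw [← mul_prod_erase _ _ hmem]
  congr 1
  · push_cast [Nat.cast_sub hm1]; ring
  · let σ : ℕ → ℕ := fun i => if i < m then m - 1 - i else p + m - 1 - i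
    refine prod_nbij' σ σ ?_ ?_ ?_ ?_ ?_ <;> intro i hi <;>
      simp only [σ, mem_erase, mem_range, mem_Icc] at hi ⊢
    · split_ifs <;> omega
    · split_ifs <;> omega
    · split_ifs <;> omega
    · split_ifs <;> omega
    · split_ifs with h h' h'
      · omega
      · rw [Nat.cast_sub (by omega), Nat.cast_sub (by omega)]; push_cast; ring
      · rw [Nat.cast_sub (by omega), Nat.cast_sub (by omega)]; push_cast; ring
      · omega

theorem gbinom_eq_div_mul_prod {K : Type*} [Field K] [CharZero K] {p m : ℕ} (hm1 : 1 ≤ m)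
    (hmp : m ≤ p - 1) (ε : K) :
    gbinom ((m : K) + ε - 1) (p - 1) =
      ε / m *
        ∏ j ∈ (Icc 1 (p - 1)).erase m, (1 + (ε - if m < j then (p : K) else 0) / j) := by
  have hmem : m ∈ Icc 1 (p - 1) := mem_Icc.mpr ⟨hm1, hmp⟩
  have hne : ∀ j ∈ (Icc 1 (p - 1)).erase m, (j : K) ≠ 0 := fun j hj =>
    Nat.cast_ne_zero.mpr (by simp only [mem_erase, mem_Icc] at hj; omega)
  have hfac : ((p - 1).factorial : K) = (∏ j ∈ (Icc 1 (p - 1)).erase m, (j : K)) * m := by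
    rw [prod_erase_mul _ _ hmem, ← Nat.cast_prod, ← prod_Ico_id_eq_factorial]
    rfl
  have hsplit : ∏ j ∈ (Icc 1 (p - 1)).erase m, ((j : K) + (ε - if m < j then (p : K) else 0)) =
      (∏ j ∈ (Icc 1 (p - 1)).erase m, (j : K)) *
        ∏ j ∈ (Icc 1 (p - 1)).erase m, (1 + (ε - if m < j then (p : K) else 0) / j) := by
    rw [← prod_mul_distrib]
    refine prod_congr rfl fun j hj => ?_
    field_simp [hne j hj]
  have hm : (m : K) ≠ 0 := Nat.cast_ne_zero.mpr (by omega)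
  have hP : ∏ j ∈ (Icc 1 (p - 1)).erase m, (j : K) ≠ 0 := prod_ne_zero_iff.mpr hne
  rw [gbinom, prod_range_sub_eq_mul_prod_erase hm1 hmp, hsplit, hfac]
  field_simp

theorem sum_erase_div_eq {K : Type*} [Field K] {n m : ℕ} (hm1 : 1 ≤ m) (hmn : m ≤ n)
    (ε c : K) :
    ∑ j ∈ (Icc 1 n).erase m, (ε - if m < j then c else 0) / j =
      ε * (∑ k ∈ Icc 1 n, 1 / (k : K) - 1 / m) -
        c * (∑ k ∈ Icc 1 n, 1 / (k : K) - ∑ k ∈ Icc 1 m, 1 / (k : K)) := by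
  have hfilter : ((Icc 1 n).erase m).filter (m < ·) = Ioc m n := by
    ext j; simp only [mem_filter, mem_erase, mem_Icc, mem_Ioc]; omega
  have htail : ∑ k ∈ Icc 1 n, 1 / (k : K) - ∑ k ∈ Icc 1 m, 1 / (k : K) =
      ∑ k ∈ Ioc m n, 1 / (k : K) := by
    have hIcc : ∀ k, Icc 1 k = Ioc 0 k := Icc_add_one_left_eq_Ioc 0
    rw [sub_eq_iff_eq_add', hIcc, hIcc, sum_Ioc_consecutive _ (Nat.zero_le m) hmn]
  have hterm : ∀ j : ℕ, (ε - if m < j then c else 0) / j =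
      ε * (1 / j) - if m < j then c * (1 / j) else 0 := fun j => by split_ifs <;> ring
  rw [sum_congr rfl fun j _ => hterm j, sum_sub_distrib, ← mul_sum, ← sum_filter, hfilter,
    ← mul_sum, sum_erase_eq_sub (mem_Icc.mpr ⟨hm1, hmn⟩), htail]

namespace Padic

variable {p : ℕ} [Fact p.Prime]

theorem norm_natCast_eq_one_of_lt {k : ℕ} (h0 : k ≠ 0) (hk : k < p) : ‖(k : ℚ_[p])‖ = 1 :=
  norm_natCast_eq_one_iff.mpr (Nat.coprime_of_lt_prime h0 hk Fact.out)

theorem norm_sum_Icc_one_div_le (hp : Odd p) :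
    ‖∑ k ∈ Icc 1 (p - 1), 1 / (k : ℚ_[p])‖ ≤ (p : ℝ)⁻¹ := by
  have hp3 : 3 ≤ p := by
    have := (Fact.out : p.Prime).two_le
    rcases hp with ⟨r, rfl⟩
    omega
  have hreflect : ∑ k ∈ Icc 1 (p - 1), 1 / (k : ℚ_[p]) =
      ∑ k ∈ Icc 1 (p - 1), 1 / ((p - k : ℕ) : ℚ_[p]) := by
    refine sum_nbij' (p - ·) (p - ·) ?_ ?_ ?_ ?_ ?_ <;> intro k hk <;>
      simp only [mem_Icc] at hk ⊢
    all_goals first | omega | (congr; omega)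
  have hpair : ∀ k ∈ Icc 1 (p - 1),
      ‖1 / (k : ℚ_[p]) + 1 / ((p - k : ℕ) : ℚ_[p])‖ ≤ (p : ℝ)⁻¹ := by
    intro k hk
    rw [mem_Icc] at hk
    have hk1 : ‖(k : ℚ_[p])‖ = 1 := norm_natCast_eq_one_of_lt (by omega) (by omega)
    have hk2 : ‖((p - k : ℕ) : ℚ_[p])‖ = 1 :=
      norm_natCast_eq_one_of_lt (by omega) (by omega)
    have hsum : 1 / (k : ℚ_[p]) + 1 / ((p - k : ℕ) : ℚ_[p]) =
        p / (k * ((p - k : ℕ) : ℚ_[p])) := by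
      have hk0 : (k : ℚ_[p]) ≠ 0 := Nat.cast_ne_zero.mpr (by omega)
      have hpk0 : ((p - k : ℕ) : ℚ_[p]) ≠ 0 := Nat.cast_ne_zero.mpr (by omega)
      field_simp
      rw [Nat.cast_sub (by omega)]
      ring
    rw [hsum, norm_div, norm_mul, hk1, hk2, norm_p, mul_one, div_one]
  have h2 : ‖(2 : ℚ_[p])‖ = 1 := by
    exact_mod_cast norm_natCast_eq_one_of_lt (p := p) two_ne_zero (by omega)
  calc ‖∑ k ∈ Icc 1 (p - 1), 1 / (k : ℚ_[p])‖
      = ‖2 * ∑ k ∈ Icc 1 (p - 1), 1 / (k : ℚ_[p])‖ := by rw [norm_mul, h2, one_mul]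
    _ = ‖∑ k ∈ Icc 1 (p - 1), (1 / (k : ℚ_[p]) + 1 / ((p - k : ℕ) : ℚ_[p]))‖ := by
      rw [sum_add_distrib, ← hreflect, two_mul]
    _ ≤ (p : ℝ)⁻¹ :=
      IsUltrametricDist.norm_sum_le_of_forall_le_of_nonneg (by positivity) hpair

theorem norm_p_mul_le (t : ℤ_[p]) : ‖(p : ℚ_[p]) * t‖ ≤ (p : ℝ)⁻¹ := by
  rw [norm_mul, norm_p, PadicInt.padic_norm_e_of_padicInt]
  exact mul_le_of_le_one_right (by positivity) t.norm_le_one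

theorem norm_prod_one_add_div_sub_le {s : Finset ℕ} (hs : ∀ j ∈ s, j ≠ 0 ∧ j < p)
    {e : ℕ → ℚ_[p]} (he : ∀ j, ‖e j‖ ≤ (p : ℝ)⁻¹) :
    ‖∏ j ∈ s, (1 + e j / j) - (1 + ∑ j ∈ s, e j / j)‖ ≤ (p : ℝ)⁻¹ ^ 2 := by
  refine norm_prod_one_add_sub_one_add_sum_le s _ (inv_le_one_of_one_le₀ (mod_cast
    (Fact.out : p.Prime).one_lt.le)) fun j hj => ?_
  rw [norm_div, norm_natCast_eq_one_of_lt (hs j hj).1 (hs j hj).2, div_one]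
  exact he j

theorem exists_eq_pow_mul_of_norm_le {x : ℚ_[p]} {n : ℕ} (h : ‖x‖ ≤ (p : ℝ)⁻¹ ^ n) :
    ∃ c : ℤ_[p], x = p ^ n * c := by
  have hp : 0 < p := (Fact.out : p.Prime).pos
  have hp' : (p : ℚ_[p]) ≠ 0 := Nat.cast_ne_zero.mpr hp.ne'
  refine ⟨⟨x / p ^ n, ?_⟩, (mul_div_cancel₀ x (pow_ne_zero n hp')).symm⟩
  rwa [norm_div, norm_pow, norm_p, div_le_one (by positivity)]

end Padic

theorem stmt8 (p : ℕ) [Fact p.Prime] (hp : Odd p) (m : ℕ) (hm1 : 1 ≤ m) (hmp : m ≤ p - 1)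
    (s : ℤ_[p]) :
    ∃ c : ℤ_[p],
      gbinom ((m : ℚ_[p]) + (p : ℚ_[p]) * (s : ℚ_[p]) - 1) (p - 1) -
        ((p : ℚ_[p]) * (s : ℚ_[p]) / (m : ℚ_[p]) -
          (p : ℚ_[p]) ^ 2 * (s : ℚ_[p]) ^ 2 / (m : ℚ_[p]) ^ 2 +
          (p : ℚ_[p]) ^ 2 * (s : ℚ_[p]) / (m : ℚ_[p]) *
            (∑ k ∈ Finset.Icc 1 m, 1 / (k : ℚ_[p]))) =
      (p : ℚ_[p]) ^ 3 * (c : ℚ_[p]) := by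
  set ε : ℚ_[p] := p * s
  set H' := ∑ k ∈ Icc 1 (p - 1), 1 / (k : ℚ_[p])
  set e : ℕ → ℚ_[p] := fun j => ε - if m < j then (p : ℚ_[p]) else 0
  set E := ∏ j ∈ (Icc 1 (p - 1)).erase m, (1 + e j / j) -
    (1 + ∑ j ∈ (Icc 1 (p - 1)).erase m, e j / j)
  have hε : ‖ε‖ ≤ (p : ℝ)⁻¹ := Padic.norm_p_mul_le s
  have hεp : ‖ε - p‖ ≤ (p : ℝ)⁻¹ := by
    have : ε - p = p * ((s - 1 : ℤ_[p]) : ℚ_[p]) := by push_cast; ring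
    exact this ▸ Padic.norm_p_mul_le (s - 1)
  have hE : ‖E‖ ≤ (p : ℝ)⁻¹ ^ 2 := by
    refine Padic.norm_prod_one_add_div_sub_le (fun j hj => ?_) fun j => ?_
    · simp only [mem_erase, mem_Icc] at hj; omega
    · simp only [e]; split_ifs
      exacts [hεp, by rwa [sub_zero]]
  have key : gbinom ((m : ℚ_[p]) + ε - 1) (p - 1) - (ε / m - ε ^ 2 / m ^ 2 +
      p * ε / m * ∑ k ∈ Icc 1 m, 1 / (k : ℚ_[p])) = ε / m * ((ε - p) * H' + E) := by
    rw [gbinom_eq_div_mul_prod hm1 hmp ε]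
    simp only [E, e, sum_erase_div_eq hm1 hmp ε (p : ℚ_[p])]
    ring
  have hH' : ‖(ε - p) * H'‖ ≤ (p : ℝ)⁻¹ ^ 2 := by
    rw [norm_mul, sq]
    exact mul_le_mul hεp (Padic.norm_sum_Icc_one_div_le hp) (norm_nonneg _) (by positivity)
  refine Padic.exists_eq_pow_mul_of_norm_le ?_
  rw [show (p : ℚ_[p]) ^ 2 * s ^ 2 = ε ^ 2 by ring, show (p : ℚ_[p]) ^ 2 * s = p * ε by ring,
    key, norm_mul, norm_div, Padic.norm_natCast_eq_one_of_lt (by omega) (by omega), div_one]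
  calc ‖ε‖ * ‖(ε - p) * H' + E‖ ≤ (p : ℝ)⁻¹ * (p : ℝ)⁻¹ ^ 2 :=
        mul_le_mul hε ((IsUltrametricDist.norm_add_le_max _ _).trans (max_le hH' hE))
          (norm_nonneg _) (by positivity)
    _ = (p : ℝ)⁻¹ ^ 3 := by ring
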